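/- (Proposition 1: uniform geometric ergodicity.) For each θ ∈ Θ there is a unique probability mass function ν_θ on X with Σ_{x∈X} ν_θ(x)·Q_θ(x'|x) = ν_θ(x') for all x' ∈ X (the stationary distribution of Q_θ), and there exist constants C > 0 and α ∈ (0,1) such that for all θ ∈ Θ, all x ∈ X, and all integers t ≥ 1: ‖Q_θᵗ(x,·) − ν_θ‖_TV ≤ C·αᵗ, where Q_θᵗ denotes the t-step kernel. -/

import Mathlib

/-! Every `Q_θ` is row-stochastic, and since the environment reaches any state in one step and all
policies are strictly positive, every entry of `Q_θ²` is positive. These entries are continuous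
in `θ`, so on the compact set `Θ` they are bounded below by a single `ε > 0` (Doeblin's condition,
uniformly in `θ`). Subtracting `ε` from every entry of `Q_θ²` shows that `Q_θ²` contracts the
`ℓ¹` norm of signed vectors of total mass zero by `β = 1 - ε |X|`; this gives uniqueness of the
stationary distribution and `‖Q_θᵗ(x, ·) - ν_θ‖_TV ≤ β ^ ⌊t/2⌋ ≤ α⁻¹ αᵗ` with `α = √β`.
A stationary distribution exists because `Q_θ - 1` kills the constant vector, hence has a nonzero
left null vector `v`, and then `|v|`, normalised, is stationary as well. -/

open Finset

/-- Total variation distance between two real-valued functions on a finite set. -/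
noncomputable def tvDist {Y : Type*} [Fintype Y] (p q : Y → ℝ) : ℝ :=
  (1 / 2) * ∑ y, |p y - q y|

/-- The combined high-level policy `π̄_hi(o'|s,o,b;θ)` of the options-with-failure
framework with failure parameter `ζ`. -/
noncomputable def pibarHiP {S O E : Type*} [Fintype O] [DecidableEq O]
    (pihi : O → S → E → ℝ) (ζ : ℝ) (o' : O) (s : S) (o : O) (b : Bool) (θ : E) : ℝ :=
  if b then pihi o' s θ
  else if o' = o then 1 - ζ + ζ / (Fintype.card O : ℝ)
  else ζ / (Fintype.card O : ℝ)

/-- The Markov kernel `Q_θ((s',a',o',b')|(s,a,o,b))` on `X = S × A × O × B`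
induced by an options-with-failure policy with parameter `θ`;
`P s' s a` denotes `P(s'|s,a)`. -/
noncomputable def optionsKernelP {S A O E : Type*} [Fintype O] [DecidableEq O]
    (P : S → S → A → ℝ)
    (pib : Bool → S → O → E → ℝ) (pihi : O → S → E → ℝ) (pilo : A → S → O → E → ℝ)
    (ζ : ℝ) (θ : E) (x x' : S × A × O × Bool) : ℝ :=
  P x'.1 x.1 x.2.1 * pib x'.2.2.2 x'.1 x.2.2.1 θ *
    pibarHiP pihi ζ x'.2.2.1 x'.1 x.2.2.1 x'.2.2.2 θ * pilo x'.2.1 x'.1 x'.2.2.1 θ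

/-- The `t`-step kernel: `kerPow Q 0` is the identity kernel, and
`kerPow Q (t+1) x y = ∑ z, kerPow Q t x z * Q z y`, so `kerPow Q 1 = Q`. -/
noncomputable def kerPow {X : Type*} [Fintype X] [DecidableEq X]
    (Q : X → X → ℝ) : ℕ → X → X → ℝ
  | 0 => fun x y => if x = y then 1 else 0
  | n + 1 => fun x y => ∑ z, kerPow Q n x z * Q z y

open Matrix

theorem kerPow_eq_pow {X : Type*} [Fintype X] [DecidableEq X] (Q : X → X → ℝ) (t : ℕ) :
    kerPow Q t = of Q ^ t := by
  induction t with
  | zero => ext x y; simp [kerPow, one_apply]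
  | succ t ih => ext x y; simp [kerPow, pow_succ, mul_apply, ih]

namespace Matrix

variable {X : Type*} [Fintype X] {M : Matrix X X ℝ}

lemma abs_vecMul_le (hM : ∀ x y, 0 ≤ M x y) (v : X → ℝ) (y : X) :
    |(v ᵥ* M) y| ≤ (|v| ᵥ* M) y := by
  refine (abs_sum_le_sum_abs _ _).trans_eq ?_
  simp [vecMul, dotProduct, abs_mul, abs_of_nonneg (hM _ y)]

variable [DecidableEq X]

lemma sum_vecMul_of_mem_rowStochastic (hM : M ∈ rowStochastic ℝ X) (v : X → ℝ) :
    ∑ y, (v ᵥ* M) y = ∑ x, v x := by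
  simpa [one_vecMul_of_mem_rowStochastic hM, dotProduct_one] using (dotProduct_mulVec v M 1).symm

lemma sum_abs_vecMul_le (hM : M ∈ rowStochastic ℝ X) (v : X → ℝ) :
    ∑ y, |(v ᵥ* M) y| ≤ ∑ x, |v x| :=
  calc ∑ y, |(v ᵥ* M) y| ≤ ∑ y, (|v| ᵥ* M) y :=
        sum_le_sum fun y _ => abs_vecMul_le hM.1 v y
    _ = ∑ x, |v x| := sum_vecMul_of_mem_rowStochastic hM |v|

lemma sum_abs_vecMul_le_of_forall_le (hM : M ∈ rowStochastic ℝ X) {ε : ℝ}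
    (hε : ∀ x y, ε ≤ M x y) {v : X → ℝ} (hv : ∑ x, v x = 0) :
    ∑ y, |(v ᵥ* M) y| ≤ (1 - ε * Fintype.card X) * ∑ x, |v x| := by
  set N : Matrix X X ℝ := M - of fun _ _ => ε
  have hvN : v ᵥ* M = v ᵥ* N := by
    ext y
    simp [N, vecMul, dotProduct, mul_sub, sum_sub_distrib, ← sum_mul, hv]
  calc ∑ y, |(v ᵥ* M) y| ≤ ∑ y, (|v| ᵥ* N) y := by
        rw [hvN]
        exact sum_le_sum fun y _ => abs_vecMul_le (fun x y => sub_nonneg.2 (hε x y)) v y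
    _ = (1 - ε * Fintype.card X) * ∑ x, |v x| := by
        simp only [N, vecMul_sub, Pi.sub_apply, sum_sub_distrib,
          sum_vecMul_of_mem_rowStochastic hM]
        simp only [Pi.abs_apply, vecMul, dotProduct, of_apply, ← sum_mul, sum_const,
          card_univ, nsmul_eq_mul]
        ring

lemma mul_card_le_one_of_forall_le [Nonempty X] (hM : M ∈ rowStochastic ℝ X) {ε : ℝ}
    (hε : ∀ x y, ε ≤ M x y) : ε * Fintype.card X ≤ 1 := by
  obtain ⟨x⟩ := ‹Nonempty X›
  calc ε * Fintype.card X = ∑ _y : X, ε := by simp [mul_comm]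
    _ ≤ ∑ y, M x y := sum_le_sum fun y _ => hε x y
    _ = 1 := sum_row_of_mem_rowStochastic hM x

lemma sum_abs_vecMul_pow_le [Nonempty X] (hM : M ∈ rowStochastic ℝ X) {ε : ℝ}
    (hε : ∀ x y, ε ≤ (M ^ 2) x y) {v : X → ℝ} (hv : ∑ x, v x = 0) (t : ℕ) :
    ∑ y, |(v ᵥ* M ^ t) y| ≤ (1 - ε * Fintype.card X) ^ (t / 2) * ∑ x, |v x| := by
  have hβ : 0 ≤ 1 - ε * Fintype.card X :=
    sub_nonneg.2 (mul_card_le_one_of_forall_le (pow_mem hM 2) hε)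
  induction t using Nat.twoStepInduction with
  | zero => simp
  | one => simpa using sum_abs_vecMul_le hM v
  | more t ih _ =>
    have hvt : ∑ x, (v ᵥ* M ^ t) x = 0 := by
      rw [sum_vecMul_of_mem_rowStochastic (pow_mem hM t), hv]
    calc ∑ y, |(v ᵥ* M ^ (t + 2)) y|
        = ∑ y, |((v ᵥ* M ^ t) ᵥ* M ^ 2) y| := by rw [vecMul_vecMul, pow_add]
      _ ≤ (1 - ε * Fintype.card X) * ∑ x, |(v ᵥ* M ^ t) x| :=
          sum_abs_vecMul_le_of_forall_le (pow_mem hM 2) hε hvt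
      _ ≤ (1 - ε * Fintype.card X) * ((1 - ε * Fintype.card X) ^ (t / 2) * ∑ x, |v x|) :=
          mul_le_mul_of_nonneg_left ih hβ
      _ = (1 - ε * Fintype.card X) ^ ((t + 2) / 2) * ∑ x, |v x| := by
          rw [show (t + 2) / 2 = t / 2 + 1 by omega]; ring

lemma vecMul_pow_eq_self {v : X → ℝ} (hv : v ᵥ* M = v) (t : ℕ) : v ᵥ* M ^ t = v := by
  induction t with
  | zero => simp
  | succ t ih => rw [pow_succ, ← vecMul_vecMul, ih, hv]

lemma eq_of_vecMul_eq_self [Nonempty X] (hM : M ∈ rowStochastic ℝ X) {ε : ℝ} (hε₀ : 0 < ε)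
    (hε : ∀ x y, ε ≤ (M ^ 2) x y) {μ ν : X → ℝ} (hsum : ∑ x, μ x = ∑ x, ν x)
    (hμ : μ ᵥ* M = μ) (hν : ν ᵥ* M = ν) : μ = ν := by
  have hfix : (μ - ν) ᵥ* M ^ 2 = μ - ν := by
    rw [sub_vecMul, vecMul_pow_eq_self hμ, vecMul_pow_eq_self hν]
  have hzero : ∑ x, (μ - ν) x = 0 := by simp [sum_sub_distrib, hsum]
  have hcontr := sum_abs_vecMul_le_of_forall_le (pow_mem hM 2) hε hzero
  rw [hfix] at hcontr
  have hεX : 0 < ε * Fintype.card X := by have := Fintype.card_pos (α := X); positivity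
  have hnorm : ∑ x, |(μ - ν) x| = 0 :=
    le_antisymm (by nlinarith) (sum_nonneg fun x _ => abs_nonneg _)
  have hpoint := (sum_eq_zero_iff_of_nonneg fun x _ => abs_nonneg ((μ - ν) x)).1 hnorm
  exact sub_eq_zero.1 (funext fun x => abs_eq_zero.1 (hpoint x (mem_univ x)))

lemma exists_stationary_of_mem_rowStochastic [Nonempty X] (hM : M ∈ rowStochastic ℝ X) :
    ∃ ν : X → ℝ, (∀ x, 0 ≤ ν x) ∧ ∑ x, ν x = 1 ∧ ν ᵥ* M = ν := by
  obtain ⟨v, hv0, hv⟩ : ∃ v ≠ 0, v ᵥ* (M - 1) = 0 := by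
    rw [exists_vecMul_eq_zero_iff, ← exists_mulVec_eq_zero_iff]
    exact ⟨1, one_ne_zero, by rw [sub_mulVec, one_vecMul_of_mem_rowStochastic hM, one_mulVec,
      sub_self]⟩
  have hvM : v ᵥ* M = v := by rwa [vecMul_sub, vecMul_one, sub_eq_zero] at hv
  -- `|v| ≤ |v| ᵥ* M` pointwise, and both sides have the same mass.
  have habs : |v| ᵥ* M = |v| := by
    have hle : ∀ y ∈ univ, |v| y ≤ (|v| ᵥ* M) y := fun y _ => by
      simpa [hvM] using abs_vecMul_le hM.1 v y
    exact (funext fun y => ((sum_eq_sum_iff_of_le hle).1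
      (sum_vecMul_of_mem_rowStochastic hM |v|).symm y (mem_univ y)).symm)
  have hmass : 0 < ∑ x, |v x| := by
    obtain ⟨x, hx⟩ := Function.ne_iff.1 hv0
    exact sum_pos' (fun x _ => abs_nonneg _) ⟨x, mem_univ x, abs_pos.2 hx⟩
  refine ⟨(∑ x, |v x|)⁻¹ • |v|, fun x => mul_nonneg (inv_nonneg.2 hmass.le) (abs_nonneg (v x)),
    ?_, by rw [smul_vecMul, habs]⟩
  simp [← mul_sum, hmass.ne']

lemma tvDist_pow_le [Nonempty X] (hM : M ∈ rowStochastic ℝ X) {ε β : ℝ}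
    (hε : ∀ x y, ε ≤ (M ^ 2) x y) (hβ : 1 - ε * Fintype.card X ≤ β) {ν : X → ℝ}
    (hν₀ : ∀ x, 0 ≤ ν x) (hν₁ : ∑ x, ν x = 1) (hνM : ν ᵥ* M = ν) (x : X) (t : ℕ) :
    tvDist ((M ^ t) x) ν ≤ β ^ (t / 2) := by
  set δ : X → ℝ := Pi.single x 1 - ν
  have hrow : (M ^ t) x - ν = δ ᵥ* M ^ t := by
    rw [sub_vecMul, single_one_vecMul, vecMul_pow_eq_self hνM]; rfl
  have hδ₀ : ∑ y, δ y = 0 := by simp [δ, sum_sub_distrib, hν₁]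
  have hδ₂ : ∑ y, |δ y| ≤ 2 :=
    calc ∑ y, |δ y| ≤ ∑ y, ((Pi.single x 1 : X → ℝ) y + ν y) :=
          sum_le_sum fun y _ => (abs_sub _ _).trans_eq <| by
            rw [abs_of_nonneg (hν₀ y), abs_of_nonneg (by by_cases h : y = x <;> simp [h])]
      _ = 2 := by simp [sum_add_distrib, hν₁, one_add_one_eq_two]
  have hrate : 0 ≤ 1 - ε * Fintype.card X :=
    sub_nonneg.2 (mul_card_le_one_of_forall_le (pow_mem hM 2) hε)
  calc tvDist ((M ^ t) x) ν = 1 / 2 * ∑ y, |(δ ᵥ* M ^ t) y| := by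
        simp only [tvDist, ← hrow, Pi.sub_apply]
    _ ≤ 1 / 2 * ((1 - ε * Fintype.card X) ^ (t / 2) * 2) := by
        gcongr
        exact (sum_abs_vecMul_pow_le hM hε hδ₀ t).trans
          (mul_le_mul_of_nonneg_left hδ₂ (pow_nonneg hrate _))
    _ ≤ β ^ (t / 2) := by
        rw [mul_comm, mul_assoc, mul_one_div_cancel two_ne_zero, mul_one]
        exact pow_le_pow_left₀ hrate hβ _

end Matrix

lemma pow_div_two_le_sqrt {β : ℝ} (h₀ : 0 < β) (h₁ : β ≤ 1) (t : ℕ) :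
    β ^ (t / 2) ≤ (√β)⁻¹ * √β ^ t := by
  have hα : 0 < √β := Real.sqrt_pos.2 h₀
  rw [le_inv_mul_iff₀ hα]
  calc √β * β ^ (t / 2) = √β ^ (2 * (t / 2) + 1) := by
        rw [pow_succ, pow_mul, Real.sq_sqrt h₀.le, mul_comm]
    _ ≤ √β ^ t := pow_le_pow_of_le_one hα.le (Real.sqrt_le_one.mpr h₁) (by omega)

lemma exists_pos_forall_le_of_isCompact {ι E : Type*} [Finite ι] [Nonempty ι]
    [TopologicalSpace E] {K : Set E} (hK : IsCompact K) {f : ι → E → ℝ}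
    (hf : ∀ i, ContinuousOn (f i) K) (hpos : ∀ i, ∀ θ ∈ K, 0 < f i θ) :
    ∃ ε > 0, ∀ i, ∀ θ ∈ K, ε ≤ f i θ := by
  choose c hc hcf using fun i => hK.exists_forall_le' (hf i) (hpos i)
  obtain ⟨i₀, hi₀⟩ := Finite.exists_min c
  exact ⟨c i₀, hc i₀, fun i θ hθ => (hi₀ i).trans (hcf i θ hθ)⟩

section OptionsKernel

variable {S A O E : Type*} [Fintype O] [DecidableEq O]
  {P : S → S → A → ℝ} {pib : Bool → S → O → E → ℝ} {pihi : O → S → E → ℝ}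
  {pilo : A → S → O → E → ℝ} {ζ : ℝ}

lemma pibarHiP_pos (hζ : ζ ∈ Set.Ioo (0 : ℝ) 1) {θ : E} (hpihi : ∀ o s, 0 < pihi o s θ)
    (o' : O) (s : S) (o : O) (b : Bool) : 0 < pibarHiP pihi ζ o' s o b θ := by
  have hunif : 0 < ζ / Fintype.card O :=
    div_pos hζ.1 (Nat.cast_pos.2 (Fintype.card_pos_iff.2 ⟨o⟩))
  unfold pibarHiP
  split_ifs
  · exact hpihi o' s
  · linarith [hζ.2]
  · exact hunif

lemma sum_pibarHiP {θ : E} (hpihi : ∀ s, ∑ o, pihi o s θ = 1) (s : S) (o : O) (b : Bool) :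
    ∑ o', pibarHiP pihi ζ o' s o b θ = 1 := by
  have hcard : (Fintype.card O : ℝ) ≠ 0 := Nat.cast_ne_zero.2 (Fintype.card_pos_iff.2 ⟨o⟩).ne'
  cases b with
  | true => simpa [pibarHiP] using hpihi s
  | false =>
    have hsplit : ∀ o' : O, pibarHiP pihi ζ o' s o false θ =
        ζ / Fintype.card O + if o' = o then 1 - ζ else 0 := by
      intro o'; simp only [pibarHiP, Bool.false_eq_true, if_false]; split_ifs <;> ring
    simp only [hsplit, sum_add_distrib, sum_const, card_univ, nsmul_eq_mul,
      sum_ite_eq', mem_univ, if_true]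
    field_simp
    ring

lemma continuousOn_pibarHiP [TopologicalSpace E] {Θ : Set E}
    (hpihi : ∀ o s, ContinuousOn (fun θ => pihi o s θ) Θ) (o' : O) (s : S) (o : O) (b : Bool) :
    ContinuousOn (fun θ => pibarHiP pihi ζ o' s o b θ) Θ := by
  cases b with
  | true => simpa [pibarHiP] using hpihi o' s
  | false => simp only [pibarHiP, Bool.false_eq_true, if_false]; exact continuousOn_const

lemma optionsKernelP_nonneg (hζ : ζ ∈ Set.Ioo (0 : ℝ) 1) {θ : E} (hP : ∀ s' s a, 0 ≤ P s' s a)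
    (hpib : ∀ b s o, 0 < pib b s o θ) (hpihi : ∀ o s, 0 < pihi o s θ)
    (hpilo : ∀ a s o, 0 < pilo a s o θ) (x x' : S × A × O × Bool) :
    0 ≤ optionsKernelP P pib pihi pilo ζ θ x x' :=
  mul_nonneg (mul_nonneg (mul_nonneg (hP _ _ _) (hpib _ _ _).le)
    (pibarHiP_pos hζ hpihi _ _ _ _).le) (hpilo _ _ _).le

lemma optionsKernelP_pos (hζ : ζ ∈ Set.Ioo (0 : ℝ) 1) {θ : E}
    (hpib : ∀ b s o, 0 < pib b s o θ) (hpihi : ∀ o s, 0 < pihi o s θ)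
    (hpilo : ∀ a s o, 0 < pilo a s o θ) {x x' : S × A × O × Bool} (hP : 0 < P x'.1 x.1 x.2.1) :
    0 < optionsKernelP P pib pihi pilo ζ θ x x' :=
  mul_pos (mul_pos (mul_pos hP (hpib _ _ _)) (pibarHiP_pos hζ hpihi _ _ _ _)) (hpilo _ _ _)

variable [Fintype S] [Fintype A]

lemma sum_optionsKernelP {θ : E} (hPsum : ∀ s a, ∑ s', P s' s a = 1)
    (hpib : ∀ s o, ∑ b, pib b s o θ = 1) (hpihi : ∀ s, ∑ o, pihi o s θ = 1)
    (hpilo : ∀ s o, ∑ a, pilo a s o θ = 1) (x : S × A × O × Bool) :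
    ∑ x', optionsKernelP P pib pihi pilo ζ θ x x' = 1 := by
  obtain ⟨s, a, o, b⟩ := x
  simp only [Fintype.sum_prod_type, optionsKernelP]
  calc _ = ∑ s', P s' s a * ∑ b', pib b' s' o θ *
        ∑ o', pibarHiP pihi ζ o' s' o b' θ * ∑ a', pilo a' s' o' θ := by
        simp only [mul_sum, mul_assoc]
        simp_rw [sum_comm (γ := A) (α := O), sum_comm (γ := A) (α := Bool),
          sum_comm (γ := O) (α := Bool)]
    _ = 1 := by simp only [hpilo, mul_one, sum_pibarHiP hpihi, hpib, hPsum]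

variable [DecidableEq S] [DecidableEq A]

lemma optionsKernelP_mem_rowStochastic (hζ : ζ ∈ Set.Ioo (0 : ℝ) 1) {θ : E}
    (hP : ∀ s' s a, 0 ≤ P s' s a) (hPsum : ∀ s a, ∑ s', P s' s a = 1)
    (hpib : ∀ b s o, 0 < pib b s o θ) (hpib_sum : ∀ s o, ∑ b, pib b s o θ = 1)
    (hpihi : ∀ o s, 0 < pihi o s θ) (hpihi_sum : ∀ s, ∑ o, pihi o s θ = 1)
    (hpilo : ∀ a s o, 0 < pilo a s o θ) (hpilo_sum : ∀ s o, ∑ a, pilo a s o θ = 1) :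
    of (optionsKernelP P pib pihi pilo ζ θ) ∈ rowStochastic ℝ (S × A × O × Bool) :=
  mem_rowStochastic_iff_sum.2
    ⟨optionsKernelP_nonneg hζ hP hpib hpihi hpilo,
      sum_optionsKernelP hPsum hpib_sum hpihi_sum hpilo_sum⟩

lemma optionsKernelP_sq_pos (hζ : ζ ∈ Set.Ioo (0 : ℝ) 1)
    {θ : E} (hP : ∀ s' s a, 0 ≤ P s' s a) (hPsum : ∀ s a, ∑ s', P s' s a = 1)
    (hreach : ∀ s s' : S, ∃ a : A, 0 < P s' s a)
    (hpib : ∀ b s o, 0 < pib b s o θ) (hpihi : ∀ o s, 0 < pihi o s θ)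
    (hpilo : ∀ a s o, 0 < pilo a s o θ) (x y : S × A × O × Bool) :
    0 < (of (optionsKernelP P pib pihi pilo ζ θ) ^ 2) x y := by
  obtain ⟨s₁, -, hs₁⟩ : ∃ s₁ ∈ univ, (0 : ℝ) < P s₁ x.1 x.2.1 :=
    exists_lt_of_sum_lt (by simp [hPsum])
  obtain ⟨a₁, ha₁⟩ := hreach s₁ y.1
  have hQ := optionsKernelP_nonneg hζ hP hpib hpihi hpilo
  rw [sq, mul_apply]
  exact sum_pos' (fun z _ => mul_nonneg (hQ x z) (hQ z y))
    ⟨(s₁, a₁, x.2.2), mem_univ _, mul_pos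
      (optionsKernelP_pos hζ hpib hpihi hpilo hs₁)
      (optionsKernelP_pos hζ hpib hpihi hpilo ha₁)⟩

lemma continuousOn_optionsKernelP_sq [TopologicalSpace E]
    {Θ : Set E} (hpib : ∀ b s o, ContinuousOn (fun θ => pib b s o θ) Θ)
    (hpihi : ∀ o s, ContinuousOn (fun θ => pihi o s θ) Θ)
    (hpilo : ∀ a s o, ContinuousOn (fun θ => pilo a s o θ) Θ) (x y : S × A × O × Bool) :
    ContinuousOn (fun θ => (of (optionsKernelP P pib pihi pilo ζ θ) ^ 2) x y) Θ := by
  have hQ : ∀ x x' : S × A × O × Bool,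
      ContinuousOn (fun θ => optionsKernelP P pib pihi pilo ζ θ x x') Θ := fun x x' =>
    ((continuousOn_const.mul (hpib _ _ _)).mul (continuousOn_pibarHiP hpihi _ _ _ _)).mul
      (hpilo _ _ _)
  simp only [sq, mul_apply, of_apply]
  exact continuousOn_finsetSum _ fun z _ => (hQ x z).mul (hQ z y)

end OptionsKernel

theorem uniform_geometric_ergodicity_general {d : ℕ} {S A O : Type*}
    [Fintype S] [Fintype A] [Fintype O]
    [Nonempty S] [Nonempty A] [Nonempty O]
    [DecidableEq S] [DecidableEq A] [DecidableEq O]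
    (Θ : Set (EuclideanSpace ℝ (Fin d))) (hΘcomp : IsCompact Θ)
    (pib : Bool → S → O → EuclideanSpace ℝ (Fin d) → ℝ)
    (pihi : O → S → EuclideanSpace ℝ (Fin d) → ℝ)
    (pilo : A → S → O → EuclideanSpace ℝ (Fin d) → ℝ)
    (hpib_pos : ∀ θ ∈ Θ, ∀ b s o, 0 < pib b s o θ)
    (hpib_sum : ∀ θ ∈ Θ, ∀ s o, ∑ b, pib b s o θ = 1)
    (hpib_cont : ∀ b s o, ContinuousOn (fun θ => pib b s o θ) Θ)
    (hpihi_pos : ∀ θ ∈ Θ, ∀ o s, 0 < pihi o s θ)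
    (hpihi_sum : ∀ θ ∈ Θ, ∀ s, ∑ o, pihi o s θ = 1)
    (hpihi_cont : ∀ o s, ContinuousOn (fun θ => pihi o s θ) Θ)
    (hpilo_pos : ∀ θ ∈ Θ, ∀ a s o, 0 < pilo a s o θ)
    (hpilo_sum : ∀ θ ∈ Θ, ∀ s o, ∑ a, pilo a s o θ = 1)
    (hpilo_cont : ∀ a s o, ContinuousOn (fun θ => pilo a s o θ) Θ)
    (ζ : ℝ) (hζ : ζ ∈ Set.Ioo (0 : ℝ) 1)
    (P : S → S → A → ℝ)
    (hPnonneg : ∀ s' s a, 0 ≤ P s' s a) (hPsum : ∀ s a, ∑ s', P s' s a = 1)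
    (hreach : ∀ s s' : S, ∃ a : A, 0 < P s' s a) :
    ∃ ν : EuclideanSpace ℝ (Fin d) → (S × A × O × Bool) → ℝ,
      (∀ θ ∈ Θ,
        (∀ x, 0 ≤ ν θ x) ∧ (∑ x, ν θ x = 1) ∧
        (∀ x', ∑ x, ν θ x * optionsKernelP P pib pihi pilo ζ θ x x' = ν θ x') ∧
        (∀ ν' : (S × A × O × Bool) → ℝ,
          (∀ x, 0 ≤ ν' x) → (∑ x, ν' x = 1) →
          (∀ x', ∑ x, ν' x * optionsKernelP P pib pihi pilo ζ θ x x' = ν' x') →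
          ν' = ν θ)) ∧
      ∃ C > (0 : ℝ), ∃ α ∈ Set.Ioo (0 : ℝ) 1,
        ∀ θ ∈ Θ, ∀ x : S × A × O × Bool, ∀ t : ℕ, 1 ≤ t →
          tvDist (kerPow (optionsKernelP P pib pihi pilo ζ θ) t x) (ν θ) ≤ C * α ^ t := by
  set X := S × A × O × Bool
  let Q : EuclideanSpace ℝ (Fin d) → Matrix X X ℝ := fun θ =>
    of (optionsKernelP P pib pihi pilo ζ θ)
  have hQ : ∀ θ ∈ Θ, Q θ ∈ rowStochastic ℝ X := fun θ hθ =>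
    optionsKernelP_mem_rowStochastic hζ hPnonneg hPsum (hpib_pos θ hθ) (hpib_sum θ hθ)
      (hpihi_pos θ hθ) (hpihi_sum θ hθ) (hpilo_pos θ hθ) (hpilo_sum θ hθ)
  obtain ⟨ε, hε, hQ₂⟩ : ∃ ε > 0, ∀ p : X × X, ∀ θ ∈ Θ, ε ≤ (Q θ ^ 2) p.1 p.2 :=
    exists_pos_forall_le_of_isCompact hΘcomp
      (fun p => continuousOn_optionsKernelP_sq hpib_cont hpihi_cont hpilo_cont p.1 p.2)
      (fun p θ hθ => optionsKernelP_sq_pos hζ hPnonneg hPsum hreach (hpib_pos θ hθ)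
        (hpihi_pos θ hθ) (hpilo_pos θ hθ) p.1 p.2)
  -- the contraction rate `1 - ε |X|` could vanish; `α = √β` must not
  set β := max (1 - ε * Fintype.card X) (1 / 2)
  have hβ₀ : 0 < β := lt_max_of_lt_right one_half_pos
  have hβ₁ : β < 1 :=
    max_lt (by linarith [show 0 < ε * Fintype.card X by positivity]) one_half_lt_one
  choose! ν hν₀ hν₁ hνQ using fun θ (hθ : θ ∈ Θ) =>
    exists_stationary_of_mem_rowStochastic (hQ θ hθ)
  refine ⟨ν, fun θ hθ => ⟨hν₀ θ hθ, hν₁ θ hθ, congrFun (hνQ θ hθ), fun ν' _ hν'₁ hν'Q => ?_⟩,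
    (√β)⁻¹, by positivity, √β, ⟨Real.sqrt_pos.2 hβ₀, (Real.sqrt_lt' one_pos).2 (by simpa)⟩,
    fun θ hθ x t _ => ?_⟩
  · exact eq_of_vecMul_eq_self (hQ θ hθ) hε (fun x y => hQ₂ (x, y) θ hθ)
      (by rw [hν'₁, hν₁ θ hθ]) (funext hν'Q) (hνQ θ hθ)
  · rw [kerPow_eq_pow]
    exact (tvDist_pow_le (hQ θ hθ) (fun x y => hQ₂ (x, y) θ hθ) (le_max_left _ _) (hν₀ θ hθ)
      (hν₁ θ hθ) (hνQ θ hθ) x t).trans (pow_div_two_le_sqrt hβ₀ hβ₁.le t)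

/-- **Proposition 1: uniform geometric ergodicity** of the chain induced by a
parameterized options-with-failure policy over a compact parameter set. -/
theorem uniform_geometric_ergodicity {d : ℕ} {S A O : Type*}
    [Fintype S] [Fintype A] [Fintype O]
    [Nonempty S] [Nonempty A] [Nonempty O]
    [DecidableEq S] [DecidableEq A] [DecidableEq O]
    (Θ : Set (EuclideanSpace ℝ (Fin d))) (hΘne : Θ.Nonempty) (hΘcomp : IsCompact Θ)
    (pib : Bool → S → O → EuclideanSpace ℝ (Fin d) → ℝ)
    (pihi : O → S → EuclideanSpace ℝ (Fin d) → ℝ)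
    (pilo : A → S → O → EuclideanSpace ℝ (Fin d) → ℝ)
    (hpib_pos : ∀ θ ∈ Θ, ∀ b s o, 0 < pib b s o θ)
    (hpib_sum : ∀ θ ∈ Θ, ∀ s o, ∑ b, pib b s o θ = 1)
    (hpib_cont : ∀ b s o, ContinuousOn (fun θ => pib b s o θ) Θ)
    (hpihi_pos : ∀ θ ∈ Θ, ∀ o s, 0 < pihi o s θ)
    (hpihi_sum : ∀ θ ∈ Θ, ∀ s, ∑ o, pihi o s θ = 1)
    (hpihi_cont : ∀ o s, ContinuousOn (fun θ => pihi o s θ) Θ)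
    (hpilo_pos : ∀ θ ∈ Θ, ∀ a s o, 0 < pilo a s o θ)
    (hpilo_sum : ∀ θ ∈ Θ, ∀ s o, ∑ a, pilo a s o θ = 1)
    (hpilo_cont : ∀ a s o, ContinuousOn (fun θ => pilo a s o θ) Θ)
    (ζ : ℝ) (hζ : ζ ∈ Set.Ioo (0 : ℝ) 1)
    (P : S → S → A → ℝ)
    (hPnonneg : ∀ s' s a, 0 ≤ P s' s a) (hPsum : ∀ s a, ∑ s', P s' s a = 1)
    (hreach : ∀ s s' : S, ∃ a : A, 0 < P s' s a) :
    ∃ ν : EuclideanSpace ℝ (Fin d) → (S × A × O × Bool) → ℝ,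
      (∀ θ ∈ Θ,
        (∀ x, 0 ≤ ν θ x) ∧ (∑ x, ν θ x = 1) ∧
        (∀ x', ∑ x, ν θ x * optionsKernelP P pib pihi pilo ζ θ x x' = ν θ x') ∧
        (∀ ν' : (S × A × O × Bool) → ℝ,
          (∀ x, 0 ≤ ν' x) → (∑ x, ν' x = 1) →
          (∀ x', ∑ x, ν' x * optionsKernelP P pib pihi pilo ζ θ x x' = ν' x') →
          ν' = ν θ)) ∧
      ∃ C > (0 : ℝ), ∃ α ∈ Set.Ioo (0 : ℝ) 1,
        ∀ θ ∈ Θ, ∀ x : S × A × O × Bool, ∀ t : ℕ, 1 ≤ t →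
          tvDist (kerPow (optionsKernelP P pib pihi pilo ζ θ) t x) (ν θ) ≤ C * α ^ t :=
  uniform_geometric_ergodicity_general Θ hΘcomp pib pihi pilo hpib_pos hpib_sum hpib_cont hpihi_pos
    hpihi_sum hpihi_cont hpilo_pos hpilo_sum hpilo_cont ζ hζ P hPnonneg hPsum hreach
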